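/- arXiv:2107.05762 — 2 statements merged into one kernel-verified Lean document; each statement's English description precedes it below -/
import Mathlib

section
/- (Individual fairness of the causal assessment rule.) Let θ* ∈ ℝ^m with ‖θ*‖₂ = 1 and let C = {i : θ*_i ≠ 0}. Consider two agents with baseline features b, b' ∈ ℝ^m and effort conversion matrices E, E' ∈ ℝ^{m×d}, receiving predictions ŷ = bᵀθ* + θ*ᵀ(E Eᵀ)θ* + ô and ŷ' = b'ᵀθ* + θ*ᵀ(E' E'ᵀ)θ* + ô for a common offset ô ∈ ℝ. Then |ŷ − ŷ'| ≤ ‖b_C − b'_C‖₂ + ‖(E Eᵀ)_C − (E' E'ᵀ)_C‖₂, where the matrix norm is the operator norm induced by the Euclidean norm. -/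
/-!
Both predictions are affine in `(b, E Eᵀ)`: `ŷ - ŷ' = (b - b') ⬝ θ* + θ*ᵀ (E Eᵀ - E' E'ᵀ) θ*`.
Since `θ*` vanishes off `C`, neither term sees the entries that the restrictions to `C` discard,
so `b, E Eᵀ` may be replaced by their restrictions. Cauchy–Schwarz and the operator-norm bound,
with `‖θ*‖ = 1`, then bound the two terms by `‖b_C - b'_C‖` and `‖(E Eᵀ)_C - (E' E'ᵀ)_C‖`.
-/

open Matrix
open scoped Classical

/-- Restriction of a vector to an index set `C`: entries outside `C` are zeroed out. -/
noncomputable def vecRestrict {m : ℕ} (C : Set (Fin m)) (b : Fin m → ℝ) : Fin m → ℝ :=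
  fun i => if i ∈ C then b i else 0

/-- Restriction of a matrix to an index set `C`: the `(i,j)` entry is kept iff
`i ∈ C` or `j ∈ C`, and zeroed out otherwise. -/
noncomputable def matRestrict {m : ℕ} (C : Set (Fin m)) (M : Matrix (Fin m) (Fin m) ℝ) :
    Matrix (Fin m) (Fin m) ℝ :=
  Matrix.of fun i j => if i ∈ C ∨ j ∈ C then M i j else 0

theorem sum_sum_mul_mul_eq_dotProduct_mulVec {n : Type*} [Fintype n]
    (M : Matrix n n ℝ) (θ : n → ℝ) :
    ∑ i, ∑ j, θ i * M i j * θ j = θ ⬝ᵥ (M *ᵥ θ) := by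
  simp only [dotProduct, mulVec, Finset.mul_sum, mul_assoc]

section Restrict

variable {m : ℕ} {C : Set (Fin m)} {θ : Fin m → ℝ}

theorem vecRestrict_dotProduct_of_support (hθ : ∀ i ∉ C, θ i = 0) (b : Fin m → ℝ) :
    vecRestrict C b ⬝ᵥ θ = b ⬝ᵥ θ := by
  refine Finset.sum_congr rfl fun i _ => ?_
  by_cases hi : i ∈ C <;> simp [vecRestrict, hi, hθ]

theorem dotProduct_matRestrict_mulVec_of_support (hθ : ∀ i ∉ C, θ i = 0)
    (M : Matrix (Fin m) (Fin m) ℝ) :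
    θ ⬝ᵥ (matRestrict C M *ᵥ θ) = θ ⬝ᵥ (M *ᵥ θ) := by
  simp only [dotProduct, mulVec, Finset.mul_sum]
  refine Finset.sum_congr rfl fun i _ => Finset.sum_congr rfl fun j _ => ?_
  by_cases hi : i ∈ C
  · simp [matRestrict, hi]
  · by_cases hj : j ∈ C <;> simp [matRestrict, hi, hj, hθ]

end Restrict

section Bounds

variable {n : Type*} [Fintype n]

theorem abs_dotProduct_le_norm_toLp_mul (v w : n → ℝ) :
    |v ⬝ᵥ w| ≤ ‖WithLp.toLp 2 v‖ * ‖WithLp.toLp 2 w‖ := by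
  simpa [EuclideanSpace.inner_toLp_toLp, dotProduct_comm] using
    abs_real_inner_le_norm (WithLp.toLp 2 v) (WithLp.toLp 2 w)

variable [DecidableEq n]

theorem abs_dotProduct_mulVec_le_opNorm_mul_sq (A : Matrix n n ℝ) (θ : n → ℝ) :
    |θ ⬝ᵥ (A *ᵥ θ)| ≤ ‖toEuclideanCLM (𝕜 := ℝ) A‖ * ‖WithLp.toLp 2 θ‖ ^ 2 := by
  set x := WithLp.toLp 2 θ
  calc |θ ⬝ᵥ (A *ᵥ θ)| = |inner ℝ x (toEuclideanCLM (𝕜 := ℝ) A x)| := by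
        rw [inner_toEuclideanCLM]
    _ ≤ ‖x‖ * ‖toEuclideanCLM (𝕜 := ℝ) A x‖ := abs_real_inner_le_norm _ _
    _ ≤ ‖x‖ * (‖toEuclideanCLM (𝕜 := ℝ) A‖ * ‖x‖) := by
        gcongr
        exact ContinuousLinearMap.le_opNorm _ _
    _ = ‖toEuclideanCLM (𝕜 := ℝ) A‖ * ‖x‖ ^ 2 := by ring

theorem abs_dotProduct_add_quadForm_le_of_norm_eq_one {θ : n → ℝ}
    (hθ : ‖WithLp.toLp 2 θ‖ = 1) (v : n → ℝ) (A : Matrix n n ℝ) :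
    |v ⬝ᵥ θ + θ ⬝ᵥ (A *ᵥ θ)| ≤ ‖WithLp.toLp 2 v‖ + ‖toEuclideanCLM (𝕜 := ℝ) A‖ := by
  calc |v ⬝ᵥ θ + θ ⬝ᵥ (A *ᵥ θ)| ≤ |v ⬝ᵥ θ| + |θ ⬝ᵥ (A *ᵥ θ)| := abs_add_le _ _
    _ ≤ ‖WithLp.toLp 2 v‖ * ‖WithLp.toLp 2 θ‖ +
          ‖toEuclideanCLM (𝕜 := ℝ) A‖ * ‖WithLp.toLp 2 θ‖ ^ 2 :=
        add_le_add (abs_dotProduct_le_norm_toLp_mul v θ)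
          (abs_dotProduct_mulVec_le_opNorm_mul_sq A θ)
    _ = ‖WithLp.toLp 2 v‖ + ‖toEuclideanCLM (𝕜 := ℝ) A‖ := by rw [hθ]; ring

end Bounds

/-- individual fairness of the causal rule: with `‖θ*‖₂ = 1` and
`C = {i : θ*_i ≠ 0}`, for predictions `ŷ = bᵀθ* + θ*ᵀ(EEᵀ)θ* + ô` and
`ŷ' = b'ᵀθ* + θ*ᵀ(E'E'ᵀ)θ* + ô`,
`|ŷ − ŷ'| ≤ ‖b_C − b'_C‖₂ + ‖(EEᵀ)_C − (E'E'ᵀ)_C‖_op`. -/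
theorem stmt12 {m d : ℕ} (θstar : Fin m → ℝ)
    (hnorm : ‖(WithLp.equiv 2 (Fin m → ℝ)).symm θstar‖ = 1)
    (C : Set (Fin m)) (hC : C = {i | θstar i ≠ 0})
    (b b' : Fin m → ℝ) (E E' : Matrix (Fin m) (Fin d) ℝ) (ohat : ℝ)
    (yhat yhat' : ℝ)
    (hyhat : yhat = (∑ i, b i * θstar i) +
      (∑ i, ∑ j, θstar i * (E * Eᵀ) i j * θstar j) + ohat)
    (hyhat' : yhat' = (∑ i, b' i * θstar i) +
      (∑ i, ∑ j, θstar i * (E' * E'ᵀ) i j * θstar j) + ohat) :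
    |yhat - yhat'| ≤
      ‖(WithLp.equiv 2 (Fin m → ℝ)).symm (vecRestrict C b - vecRestrict C b')‖ +
      ‖Matrix.toEuclideanCLM (𝕜 := ℝ)
        (matRestrict C (E * Eᵀ) - matRestrict C (E' * E'ᵀ))‖ := by
  have hθ : ∀ i ∉ C, θstar i = 0 := by simp [hC]
  have hdiff : yhat - yhat' =
      (vecRestrict C b - vecRestrict C b') ⬝ᵥ θstar +
        θstar ⬝ᵥ ((matRestrict C (E * Eᵀ) - matRestrict C (E' * E'ᵀ)) *ᵥ θstar) := by
    rw [sub_dotProduct, sub_mulVec, dotProduct_sub,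
      vecRestrict_dotProduct_of_support hθ, vecRestrict_dotProduct_of_support hθ,
      dotProduct_matRestrict_mulVec_of_support hθ, dotProduct_matRestrict_mulVec_of_support hθ,
      ← sum_sum_mul_mul_eq_dotProduct_mulVec, ← sum_sum_mul_mul_eq_dotProduct_mulVec,
      hyhat, hyhat']
    simp only [dotProduct]
    ring
  rw [hdiff]
  exact abs_dotProduct_add_quadForm_le_of_norm_eq_one hnorm _ _
end

section
/- (Example: exact prediction gap.) Let n be even, let θ* ∈ ℝ^n have θ*_i = 0 for i ≤ n/2 and θ*_i = √(2/n) for i > n/2, and set C = {n/2+1,…,n}. Let b = b' ∈ ℝ^n, E = diag(δ) and E' = diag(δ') with δ_i = √n for i ≤ n/2 and δ_i = 1 for i > n/2, and δ'_i = 0 for i ≤ n/2 and δ'_i = 1 for i > n/2. Then b_C = b'_C and (E Eᵀ)_C = (E' E'ᵀ)_C, and for every θ ∈ ℝ^n, the predictions ŷ = bᵀθ + θᵀ(E Eᵀ)θ + ô and ŷ' = b'ᵀθ + θᵀ(E' E'ᵀ)θ + ô satisfy |ŷ − ŷ'| = n Σ_{i=1}^{n/2} θ_i². -/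
open Matrix
open scoped Classical

/-!
The effort matrices `E Eᵀ = diag(δ²)` and `E' E'ᵀ = diag(δ'²)` are diagonal and agree on the
second half of the indices, so their restrictions to `C` coincide. The baseline terms and the
offset cancel in `ŷ - ŷ'`, and the quadratic forms of the two diagonal matrices differ by
`∑ (δᵢ² - δ'ᵢ²) θᵢ² = n ∑_{i < n/2} θᵢ²`, which is nonnegative.
-/

open Finset

lemma diagonal_mul_diagonal_transpose {ι R : Type*} [Fintype ι] [DecidableEq ι] [CommSemiring R]
    (d : ι → R) : diagonal d * (diagonal d)ᵀ = diagonal fun i => d i * d i := by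
  rw [diagonal_transpose, diagonal_mul_diagonal]

lemma sum_sum_mul_diagonal_mul {ι R : Type*} [Fintype ι] [DecidableEq ι] [CommSemiring R]
    (d θ : ι → R) : ∑ i, ∑ j, θ i * diagonal d i j * θ j = ∑ i, d i * θ i ^ 2 := by
  refine sum_congr rfl fun i _ => ?_
  rw [sum_eq_single i (fun j _ hj => by rw [diagonal_apply_ne _ (Ne.symm hj)]; ring)
    (by simp), diagonal_apply_eq]
  ring

lemma matRestrict_diagonal_congr {m : ℕ} {C : Set (Fin m)} {d d' : Fin m → ℝ}
    (h : ∀ i ∈ C, d i = d' i) : matRestrict C (diagonal d) = matRestrict C (diagonal d') := by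
  ext i j
  simp only [matRestrict, of_apply]
  split_ifs with hij
  · rcases eq_or_ne i j with rfl | hne
    · simp only [diagonal_apply_eq]
      exact h i (hij.elim id id)
    · simp only [diagonal_apply_ne _ hne]
  · rfl

theorem stmt14_general {n : ℕ}
    (C : Set (Fin n)) (hC : C = {i : Fin n | ¬ ((i : ℕ) < n / 2)})
    (b b' : Fin n → ℝ) (hb : b = b')
    (dl dl' : Fin n → ℝ)
    (hdl : ∀ i : Fin n, dl i = if (i : ℕ) < n / 2 then Real.sqrt n else 1)
    (hdl' : ∀ i : Fin n, dl' i = if (i : ℕ) < n / 2 then 0 else 1)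
    (E E' : Matrix (Fin n) (Fin n) ℝ)
    (hE : E = Matrix.diagonal dl) (hE' : E' = Matrix.diagonal dl') :
    vecRestrict C b = vecRestrict C b' ∧
    matRestrict C (E * Eᵀ) = matRestrict C (E' * E'ᵀ) ∧
    ∀ (θ : Fin n → ℝ) (ohat : ℝ),
      |(((∑ i, b i * θ i) + (∑ i, ∑ j, θ i * (E * Eᵀ) i j * θ j) + ohat) -
        ((∑ i, b' i * θ i) + (∑ i, ∑ j, θ i * (E' * E'ᵀ) i j * θ j) + ohat))| =
        n * ∑ i ∈ Finset.univ.filter (fun i : Fin n => (i : ℕ) < n / 2), (θ i) ^ 2 := by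
  subst hb hE hE' hC
  have hgap (i : Fin n) :
      dl i * dl i - dl' i * dl' i = if (i : ℕ) < n / 2 then (n : ℝ) else 0 := by
    rw [hdl, hdl']
    split_ifs
    · simp [Real.mul_self_sqrt (Nat.cast_nonneg n)]
    · simp
  refine ⟨rfl, ?_, fun θ ohat => ?_⟩
  · rw [diagonal_mul_diagonal_transpose, diagonal_mul_diagonal_transpose]
    refine matRestrict_diagonal_congr fun i hi => ?_
    exact sub_eq_zero.mp ((hgap i).trans (if_neg hi))
  · rw [diagonal_mul_diagonal_transpose, diagonal_mul_diagonal_transpose,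
      sum_sum_mul_diagonal_mul, sum_sum_mul_diagonal_mul, add_sub_add_right_eq_sub,
      add_sub_add_left_eq_sub, ← sum_sub_distrib]
    simp_rw [← sub_mul, hgap, ite_mul, zero_mul, ← sum_filter, ← mul_sum]
    exact abs_of_nonneg (by positivity)

/-- example: exact prediction gap: with `n` even,
`θ*_i = 0` for `i` in the first half and `θ*_i = √(2/n)` otherwise,
`C` the second half of the indices, `b = b'`, `E = diag(δ)` and `E' = diag(δ')` with
`δ_i = √n, δ'_i = 0` on the first half and `δ_i = δ'_i = 1` on the second half, one has
`b_C = b'_C`, `(EEᵀ)_C = (E'E'ᵀ)_C`, and for every rule `θ` and offset `ô` the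
predictions satisfy `|ŷ − ŷ'| = n Σ_{i ≤ n/2} θ_i²`. -/
theorem stmt14 {n : ℕ} (hn : Even n)
    (θstar : Fin n → ℝ)
    (hθstar : ∀ i : Fin n, θstar i =
      if (i : ℕ) < n / 2 then 0 else Real.sqrt (2 / (n : ℝ)))
    (C : Set (Fin n)) (hC : C = {i : Fin n | ¬ ((i : ℕ) < n / 2)})
    (b b' : Fin n → ℝ) (hb : b = b')
    (dl dl' : Fin n → ℝ)
    (hdl : ∀ i : Fin n, dl i = if (i : ℕ) < n / 2 then Real.sqrt n else 1)
    (hdl' : ∀ i : Fin n, dl' i = if (i : ℕ) < n / 2 then 0 else 1)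
    (E E' : Matrix (Fin n) (Fin n) ℝ)
    (hE : E = Matrix.diagonal dl) (hE' : E' = Matrix.diagonal dl') :
    vecRestrict C b = vecRestrict C b' ∧
    matRestrict C (E * Eᵀ) = matRestrict C (E' * E'ᵀ) ∧
    ∀ (θ : Fin n → ℝ) (ohat : ℝ),
      |(((∑ i, b i * θ i) + (∑ i, ∑ j, θ i * (E * Eᵀ) i j * θ j) + ohat) -
        ((∑ i, b' i * θ i) + (∑ i, ∑ j, θ i * (E' * E'ᵀ) i j * θ j) + ohat))| =
        n * ∑ i ∈ Finset.univ.filter (fun i : Fin n => (i : ℕ) < n / 2), (θ i) ^ 2 :=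
  stmt14_general C hC b b' hb dl dl' hdl hdl' E E' hE hE'
end
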